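/- arXiv:2510.00343 — 2 statements merged into one kernel-verified Lean document; each statement's English description precedes it below -/
import Mathlib

section
/- Let n ≥ 1, m ≥ 1, and let X_1,…,X_n be i.i.d. uniform on {1,…,2m}. Then the statistic C_{n,m} = Σ_{1≤i<k≤n} 1{X_i = X_k and X_i is even} satisfies Var(C_{n,m}) = n(n−1)(2n + 4m − 5) / (32 m²). -/
open MeasureTheory ProbabilityTheory Finset Filter

/-- The uniform probability measure on a finite type. -/
noncomputable def uniformM (α : Type*) [Fintype α] [MeasurableSpace α] : Measure α :=
  ((Fintype.card α : ENNReal))⁻¹ • Measure.count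

/-- The pile label (in `{1, …, 2m}`) of card `i` under the pile assignment `w`
(pile indices in `Fin (2*m)` are 0-based, so pile `k` carries label `k + 1`).
Under the uniform measure on words, `fun w => Xval w i` are i.i.d. uniform on `{1, …, 2m}`. -/
def Xval {m n : ℕ} (w : Fin n → Fin (2*m)) (i : Fin n) : ℕ := (w i : ℕ) + 1

/-- Sorting key of card `i` in an `m`-shelf shuffle with pile assignment `w`:
cards are ordered first by pile label; within an odd-labeled pile they keep their
increasing order, and within an even-labeled pile their order is reversed. -/
noncomputable def shelfKey {m n : ℕ} (w : Fin n → Fin (2*m)) (i : Fin n) :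
    Lex (Fin (2*m) × ℤ) :=
  toLex (w i, if Even (Xval w i) then -(i : ℤ) else (i : ℤ))

/-- The permutation of `{1, …, n}` (0-based: of `Fin n`) produced by an `m`-shelf shuffle
with pile assignment `w`: position `p` of the shuffled deck holds card `shelfPerm w p`. -/
noncomputable def shelfPerm {m n : ℕ} (w : Fin n → Fin (2*m)) : Equiv.Perm (Fin n) :=
  Tuple.sort (shelfKey w)

/-- The number of inversions of a permutation: pairs `i < j` with `π i > π j`. -/
def invCount {n : ℕ} (π : Equiv.Perm (Fin n)) : ℕ :=
  ((Finset.univ : Finset (Fin n × Fin n)).filter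
    (fun p => p.1 < p.2 ∧ π p.2 < π p.1)).card

/-- `I_{n,m}`: the number of inversions after an `m`-shelf shuffle of `n` cards,
as a random variable on the space of pile-assignment words. -/
noncomputable def shelfInv (m n : ℕ) (w : Fin n → Fin (2*m)) : ℕ := invCount (shelfPerm w)

/-!
Write `C` as the sum, over the two-element sets `s` of indices, of the indicator `Y_s` that the
word is constant on `s` with an even value. Since the letters are independent and uniform among
`K = 2m` labels, `e = m` of them even, `E[Y_s Y_t] = e / K^|s ∪ t|` when `s` and `t` meet, while
`Y_s` and `Y_t` are uncorrelated when `s` and `t` are disjoint. So in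
`Var C = ∑_{s,t} Cov(Y_s, Y_t)` only `t = s` and the `2(n - 2)` sets `t` meeting `s` in one
point contribute.
-/

section Words
variable {α β : Type*}

lemma card_filter_eqOn_mul_pow [Fintype α] [DecidableEq α] [Fintype β] [DecidableEq β]
    (s : Finset α) (g : α → β) :
    #{w : α → β | ∀ x ∈ s, w x = g x} * Fintype.card β ^ #s =
      Fintype.card β ^ Fintype.card α := by
  have hpi : ({w : α → β | ∀ x ∈ s, w x = g x} : Finset (α → β)) =
      Fintype.piFinset fun x => if x ∈ s then {g x} else univ := by
    ext w
    simp only [mem_filter, mem_univ, true_and, Fintype.mem_piFinset]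
    refine forall_congr' fun x => ?_
    split_ifs with hx <;> simp [hx]
  rw [hpi, Fintype.card_piFinset]
  simp only [apply_ite card, card_singleton, card_univ]
  rw [prod_ite, prod_const_one, one_mul, prod_const, ← pow_add, filter_not, filter_mem_eq_inter,
    univ_inter, ← compl_eq_univ_sdiff, card_compl, Nat.sub_add_cancel (card_le_univ s)]

def IsConstOnIn (E : Finset β) (s : Finset α) (w : α → β) : Prop :=
  ∃ c ∈ E, ∀ x ∈ s, w x = c

instance [DecidableEq β] (E : Finset β) (s : Finset α) : DecidablePred (IsConstOnIn E s) :=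
  fun w => inferInstanceAs (Decidable (∃ c ∈ E, ∀ x ∈ s, w x = c))

def constOnIndicator [DecidableEq β] (E : Finset β) (s : Finset α) (w : α → β) : ℝ :=
  if IsConstOnIn E s w then 1 else 0

variable (E : Finset β) {s t : Finset α}

lemma constOnIndicator_mul [DecidableEq β] (w : α → β) :
    constOnIndicator E s w * constOnIndicator E t w =
      if IsConstOnIn E s w ∧ IsConstOnIn E t w then 1 else 0 := by
  rw [constOnIndicator, constOnIndicator, ite_zero_mul_ite_zero, one_mul]

lemma isConstOnIn_union_iff [DecidableEq α] (hst : (s ∩ t).Nonempty) (w : α → β) :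
    IsConstOnIn E (s ∪ t) w ↔ IsConstOnIn E s w ∧ IsConstOnIn E t w := by
  obtain ⟨x, hx⟩ := hst
  rw [mem_inter] at hx
  constructor
  · rintro ⟨c, hc, hw⟩
    exact ⟨⟨c, hc, fun y hy => hw y (mem_union_left t hy)⟩,
      ⟨c, hc, fun y hy => hw y (mem_union_right s hy)⟩⟩
  · rintro ⟨⟨c, hc, hs⟩, ⟨d, -, ht⟩⟩
    have hcd : c = d := (hs x hx.1).symm.trans (ht x hx.2)
    refine ⟨c, hc, fun y hy => ?_⟩
    rcases mem_union.1 hy with hy | hy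
    · exact hs y hy
    · exact hcd ▸ ht y hy

variable [Fintype α] [DecidableEq α] [Fintype β] [DecidableEq β]

lemma card_filter_isConstOnIn (hs : s.Nonempty) :
    #{w : α → β | IsConstOnIn E s w} * Fintype.card β ^ #s =
      #E * Fintype.card β ^ Fintype.card α := by
  have hunion : ({w : α → β | IsConstOnIn E s w} : Finset (α → β)) =
      E.biUnion fun c => {w | ∀ x ∈ s, w x = c} := by
    ext w
    simp only [mem_filter, mem_biUnion, mem_univ, true_and]
    rfl
  obtain ⟨x, hx⟩ := hs
  rw [hunion, card_biUnion, sum_mul]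
  · simp only [card_filter_eqOn_mul_pow s (fun _ => _), sum_const, smul_eq_mul]
  · intro c _ d _ hcd
    simp only [disjoint_left, mem_filter, mem_univ, true_and]
    exact fun w hc hd => hcd ((hc x hx).symm.trans (hd x hx))

lemma card_filter_isConstOnIn_and (hs : s.Nonempty) (ht : t.Nonempty) (hst : Disjoint s t) :
    #{w : α → β | IsConstOnIn E s w ∧ IsConstOnIn E t w} * Fintype.card β ^ (#s + #t) =
      #E ^ 2 * Fintype.card β ^ Fintype.card α := by
  have hunion : ({w : α → β | IsConstOnIn E s w ∧ IsConstOnIn E t w} : Finset (α → β)) =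
      (E ×ˢ E).biUnion fun cd =>
        {w | ∀ x ∈ s ∪ t, w x = if x ∈ s then cd.1 else cd.2} := by
    ext w
    simp only [mem_filter, mem_univ, true_and, mem_biUnion, mem_product, mem_union]
    unfold IsConstOnIn
    constructor
    · rintro ⟨⟨c, hc, hwc⟩, ⟨d, hd, hwd⟩⟩
      refine ⟨(c, d), ⟨hc, hd⟩, fun x hx => ?_⟩
      split_ifs with hxs
      · exact hwc x hxs
      · exact hwd x (hx.resolve_left hxs)
    · rintro ⟨⟨c, d⟩, ⟨hc, hd⟩, hw⟩
      refine ⟨⟨c, hc, fun x hx => by simpa [hx] using hw x (Or.inl hx)⟩,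
        ⟨d, hd, fun x hx => by simpa [disjoint_right.1 hst hx] using hw x (Or.inr hx)⟩⟩
  obtain ⟨x, hx⟩ := hs
  obtain ⟨y, hy⟩ := ht
  rw [hunion, card_biUnion, sum_mul, ← card_union_of_disjoint hst]
  · simp only [card_filter_eqOn_mul_pow (s ∪ t) _, sum_const, smul_eq_mul, card_product, sq]
  · rintro ⟨c, d⟩ _ ⟨c', d'⟩ _ hcd
    simp only [disjoint_left, mem_filter, mem_univ, true_and]
    intro w h h'
    have hx' := (h x (mem_union_left t hx)).symm.trans (h' x (mem_union_left t hx))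
    have hy' := (h y (mem_union_right s hy)).symm.trans (h' y (mem_union_right s hy))
    simp only [hx, if_true, disjoint_right.1 hst hy, if_false] at hx' hy'
    exact hcd (Prod.ext hx' hy')

end Words

section Uniform
variable {Ω : Type*} [Fintype Ω] [MeasurableSpace Ω] [MeasurableSingletonClass Ω] [Nonempty Ω]

instance : IsProbabilityMeasure (uniformM Ω) := by
  constructor
  simp only [uniformM, Measure.smul_apply, Measure.count_univ, smul_eq_mul]
  rw [ENat.card_eq_coe_fintype_card, ENat.toENNReal_coe,
    ENNReal.inv_mul_cancel (by exact_mod_cast Fintype.card_ne_zero) (by simp)]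

lemma integral_uniformM (f : Ω → ℝ) :
    ∫ x, f x ∂uniformM Ω = (∑ x, f x) / Fintype.card Ω := by
  rw [integral_fintype (.of_finite), sum_div]
  refine sum_congr rfl fun x _ => ?_
  simp [uniformM, Measure.real, ENNReal.toReal_inv, div_eq_inv_mul]

lemma integral_ite_uniformM (P : Ω → Prop) [DecidablePred P] :
    ∫ x, (if P x then 1 else 0 : ℝ) ∂uniformM Ω = #{x | P x} / Fintype.card Ω := by
  rw [integral_uniformM, sum_boole]

end Uniform

section Moments
variable {α β : Type*} [Fintype α] [DecidableEq α] [Fintype β] [Nonempty β]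

lemma div_card_fun_eq_div_pow {k N e : ℕ}
    (h : N * Fintype.card β ^ k = e * Fintype.card β ^ Fintype.card α) :
    (N : ℝ) / Fintype.card (α → β) = e / Fintype.card β ^ k := by
  rw [Fintype.card_fun, div_eq_div_iff (by positivity) (by positivity)]
  exact_mod_cast h

variable [DecidableEq β] [MeasurableSpace β] [MeasurableSingletonClass β] (E : Finset β)
  {s t : Finset α}

lemma integral_constOnIndicator (hs : s.Nonempty) :
    ∫ w, constOnIndicator E s w ∂uniformM (α → β) = #E / Fintype.card β ^ #s := by
  unfold constOnIndicator
  rw [integral_ite_uniformM]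
  exact_mod_cast div_card_fun_eq_div_pow (card_filter_isConstOnIn E hs)

lemma integral_constOnIndicator_mul_of_inter (hst : (s ∩ t).Nonempty) :
    ∫ w, constOnIndicator E s w * constOnIndicator E t w ∂uniformM (α → β) =
      #E / Fintype.card β ^ #(s ∪ t) := by
  simp only [constOnIndicator_mul, ← isConstOnIn_union_iff E hst]
  rw [integral_ite_uniformM]
  exact_mod_cast div_card_fun_eq_div_pow
    (card_filter_isConstOnIn E (hst.mono (inter_subset_left.trans subset_union_left)))

lemma integral_constOnIndicator_mul_of_disjoint (hs : s.Nonempty) (ht : t.Nonempty)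
    (hst : Disjoint s t) :
    ∫ w, constOnIndicator E s w * constOnIndicator E t w ∂uniformM (α → β) =
      #E ^ 2 / Fintype.card β ^ (#s + #t) := by
  simp only [constOnIndicator_mul]
  rw [integral_ite_uniformM]
  exact_mod_cast div_card_fun_eq_div_pow (card_filter_isConstOnIn_and E hs ht hst)

lemma covariance_constOnIndicator (hs : s.Nonempty) (ht : t.Nonempty) :
    cov[constOnIndicator E s, constOnIndicator E t; uniformM (α → β)] =
      if Disjoint s t then 0
      else (#E : ℝ) / Fintype.card β ^ #(s ∪ t) -
        (#E : ℝ) ^ 2 / Fintype.card β ^ (#s + #t) := by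
  rw [covariance_eq_sub .of_discrete .of_discrete, integral_constOnIndicator E hs,
    integral_constOnIndicator E ht]
  split_ifs with hst
  · rw [Pi.mul_def, integral_constOnIndicator_mul_of_disjoint E hs ht hst]
    ring
  · rw [Pi.mul_def,
      integral_constOnIndicator_mul_of_inter E (not_disjoint_iff_nonempty_inter.1 hst)]
    ring

end Moments

lemma sum_filter_fst_lt_snd_eq_sum_powersetCard_two {α M : Type*} [Fintype α] [LinearOrder α]
    [AddCommMonoid M] (f : Finset α → M) :
    ∑ p ∈ univ.filter (fun p : α × α => p.1 < p.2), f {p.1, p.2} =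
      ∑ s ∈ powersetCard 2 univ, f s := by
  refine sum_bij (fun p _ => {p.1, p.2}) (fun p hp => ?_) (fun p hp q hq h => ?_) (fun s hs => ?_)
    fun _ _ => rfl
  · exact mem_powersetCard.2 ⟨subset_univ _, card_pair (mem_filter.1 hp).2.ne⟩
  · have hp := (mem_filter.1 hp).2
    have hq := (mem_filter.1 hq).2
    have hmin := congrArg Finset.min h
    have hmax := congrArg Finset.max h
    simp only [min_pair, max_pair, ← WithTop.coe_min, ← WithBot.coe_max, WithTop.coe_inj,
      WithBot.coe_inj, min_eq_left hp.le, min_eq_left hq.le, max_eq_right hp.le,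
      max_eq_right hq.le] at hmin hmax
    exact Prod.ext hmin hmax
  · obtain ⟨a, b, hab, rfl⟩ := card_eq_two.1 (mem_powersetCard.1 hs).2
    rcases hab.lt_or_gt with h | h
    · exact ⟨(a, b), mem_filter.2 ⟨mem_univ _, h⟩, rfl⟩
    · exact ⟨(b, a), mem_filter.2 ⟨mem_univ _, h⟩, pair_comm b a⟩

section Pairs
variable {α : Type*} [DecidableEq α] {s t : Finset α}

lemma card_union_eq_three_of_card_eq_two (hs : #s = 2) (ht : #t = 2) (hne : s ≠ t)
    (hst : ¬Disjoint s t) : #(s ∪ t) = 3 := by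
  have hinter_pos : 0 < #(s ∩ t) := card_pos.2 (not_disjoint_iff_nonempty_inter.1 hst)
  have hinter_ne : #(s ∩ t) ≠ 2 := fun h => hne <|
    (eq_of_subset_of_card_le inter_subset_left (by omega)).symm.trans
      (eq_of_subset_of_card_le inter_subset_right (by omega))
  have := card_union_add_card_inter s t
  have := card_le_card (inter_subset_left (s₁ := s) (s₂ := t))
  omega

variable [Fintype α]

lemma card_filter_not_disjoint_add_choose_two (hs : #s = 2) :
    #{t ∈ powersetCard 2 univ | ¬Disjoint s t} + (Fintype.card α - 2).choose 2 =
      (Fintype.card α).choose 2 := by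
  have hdisj : ({t ∈ powersetCard 2 univ | Disjoint s t} : Finset (Finset α)) =
      powersetCard 2 sᶜ := by
    ext t
    simp [mem_powersetCard, subset_compl_iff_disjoint_left, and_comm]
  rw [← hs, ← card_compl, ← card_powersetCard, hs, ← hdisj, ← card_univ, ← card_powersetCard,
    add_comm, card_filter_add_card_filter_not]

end Pairs

section PairVariance
variable {α β : Type*} [Fintype α] [DecidableEq α] [Fintype β] [DecidableEq β] [Nonempty β]
  [MeasurableSpace β] [MeasurableSingletonClass β] (E : Finset β)

lemma sum_covariance_constOnIndicator_pairs {s : Finset α} (hs : #s = 2) :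
    ∑ t ∈ powersetCard 2 univ,
        cov[constOnIndicator E s, constOnIndicator E t; uniformM (α → β)] =
      (#E / Fintype.card β ^ 2 - #E ^ 2 / Fintype.card β ^ 4) +
        2 * (Fintype.card α - 2) * (#E / Fintype.card β ^ 3 - #E ^ 2 / Fintype.card β ^ 4) := by
  set P : Finset (Finset α) := {t ∈ powersetCard 2 univ | ¬Disjoint s t}
  have hsP : s ∈ P := mem_filter.2 ⟨mem_powersetCard.2 ⟨subset_univ s, hs⟩,
    fun h => (card_pos.1 (by omega)).ne_empty (disjoint_self_iff_empty s |>.1 h)⟩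
  have hcov : ∀ t ∈ powersetCard 2 univ,
      cov[constOnIndicator E s, constOnIndicator E t; uniformM (α → β)] =
        if ¬Disjoint s t then
          (#E : ℝ) / Fintype.card β ^ #(s ∪ t) - (#E : ℝ) ^ 2 / Fintype.card β ^ 4
        else 0 := by
    intro t ht
    have ht2 : #t = 2 := (mem_powersetCard.1 ht).2
    rw [covariance_constOnIndicator E (card_pos.1 (by omega)) (card_pos.1 (by omega)), hs, ht2]
    split_ifs <;> simp_all
  have hrest : ∀ t ∈ P.erase s,
      (#E : ℝ) / Fintype.card β ^ #(s ∪ t) - (#E : ℝ) ^ 2 / Fintype.card β ^ 4 =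
        (#E : ℝ) / Fintype.card β ^ 3 - (#E : ℝ) ^ 2 / Fintype.card β ^ 4 := by
    intro t ht
    simp only [P, mem_erase, mem_filter, mem_powersetCard] at ht
    rw [card_union_eq_three_of_card_eq_two hs ht.2.1.2 (Ne.symm ht.1) ht.2.2]
  have hcard : (#(P.erase s) : ℝ) = 2 * (Fintype.card α - 2) := by
    have h := card_filter_not_disjoint_add_choose_two hs
    have hn : 2 ≤ Fintype.card α := hs ▸ card_le_univ s
    rw [card_erase_of_mem hsP, Nat.cast_sub (card_pos.2 ⟨s, hsP⟩)]
    rw [← Nat.cast_inj (R := ℝ), Nat.cast_add, Nat.cast_choose_two, Nat.cast_choose_two,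
      Nat.cast_sub hn] at h
    simp only [P] at h ⊢
    push_cast
    linarith
  rw [sum_congr rfl hcov, ← sum_filter, ← add_sum_erase P _ hsP, sum_congr rfl hrest, sum_const,
    nsmul_eq_mul, hcard, union_self, hs]

theorem variance_sum_constOnIndicator_pairs :
    Var[fun w => ∑ s ∈ powersetCard 2 univ, constOnIndicator E s w; uniformM (α → β)] =
      (Fintype.card α).choose 2 * ((#E / Fintype.card β ^ 2 - #E ^ 2 / Fintype.card β ^ 4) +
        2 * (Fintype.card α - 2) * (#E / Fintype.card β ^ 3 - #E ^ 2 / Fintype.card β ^ 4)) := by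
  rw [variance_fun_sum' fun _ _ => .of_discrete, sum_congr rfl fun s hs =>
    sum_covariance_constOnIndicator_pairs E (mem_powersetCard.1 hs).2, sum_const,
    card_powersetCard, card_univ, nsmul_eq_mul]

end PairVariance

lemma card_filter_even_succ (m : ℕ) : #{a : Fin (2 * m) | Even ((a : ℕ) + 1)} = m := by
  calc #{a : Fin (2 * m) | Even ((a : ℕ) + 1)} = #{e ∈ range (2 * m) | 2 ∣ e + 1} := by
        refine card_bij (fun a _ => (a : ℕ)) (fun a ha => ?_)
          (fun a _ b _ h => Fin.val_injective h) fun e he => ?_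
        · simpa [even_iff_two_dvd] using ha
        · simp only [mem_filter, mem_range] at he
          exact ⟨⟨e, he.1⟩, by simpa [even_iff_two_dvd] using he.2, rfl⟩
    _ = m := by rw [Nat.card_multiples, Nat.mul_div_cancel_left m two_pos]

lemma xval_eq_and_even_iff_isConstOnIn {n m : ℕ} (w : Fin n → Fin (2 * m)) (i k : Fin n) :
    Xval w i = Xval w k ∧ Even (Xval w i) ↔
      IsConstOnIn {a : Fin (2 * m) | Even ((a : ℕ) + 1)} {i, k} w := by
  simp only [Xval, IsConstOnIn, mem_insert, mem_singleton, forall_eq_or_imp, forall_eq,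
    mem_filter, mem_univ, true_and, add_left_inj, Fin.val_inj]
  constructor
  · rintro ⟨h, he⟩
    exact ⟨w i, he, rfl, h.symm⟩
  · rintro ⟨c, hc, rfl, h⟩
    exact ⟨h.symm, hc⟩

theorem variance_C_general (n m : ℕ) (hm : 1 ≤ m) :
    variance (fun w : Fin n → Fin (2*m) =>
        ((∑ p ∈ (Finset.univ : Finset (Fin n × Fin n)).filter (fun p => p.1 < p.2),
          if Xval w p.1 = Xval w p.2 ∧ Even (Xval w p.1) then (1 : ℕ) else 0 : ℕ) : ℝ))
      (uniformM (Fin n → Fin (2*m))) =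
    n * (n - 1) * (2 * n + 4 * m - 5) / (32 * m^2) := by
  have : Nonempty (Fin (2 * m)) := ⟨⟨0, by omega⟩⟩
  have hC : (fun w : Fin n → Fin (2 * m) =>
      ((∑ p ∈ (univ : Finset (Fin n × Fin n)).filter (fun p => p.1 < p.2),
        if Xval w p.1 = Xval w p.2 ∧ Even (Xval w p.1) then (1 : ℕ) else 0 : ℕ) : ℝ)) =
      fun w => ∑ s ∈ powersetCard 2 univ,
        constOnIndicator {a : Fin (2 * m) | Even ((a : ℕ) + 1)} s w := by
    funext w
    push_cast
    rw [← sum_filter_fst_lt_snd_eq_sum_powersetCard_two]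
    simp only [constOnIndicator, xval_eq_and_even_iff_isConstOnIn]
  rw [hC, variance_sum_constOnIndicator_pairs, card_filter_even_succ, Fintype.card_fin,
    Fintype.card_fin, Nat.cast_choose_two]
  have : (m : ℝ) ≠ 0 := by positivity
  push_cast
  field_simp
  ring

/-- For `n ≥ 1`, `m ≥ 1`, with `X_1, …, X_n` i.i.d. uniform on `{1,…,2m}`,
the statistic `C_{n,m} = Σ_{1≤i<k≤n} 1{X_i = X_k and X_i even}` has variance
`n(n−1)(2n + 4m − 5)/(32 m²)`. -/
theorem variance_C (n m : ℕ) (hn : 1 ≤ n) (hm : 1 ≤ m) :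
    variance (fun w : Fin n → Fin (2*m) =>
        ((∑ p ∈ (Finset.univ : Finset (Fin n × Fin n)).filter (fun p => p.1 < p.2),
          if Xval w p.1 = Xval w p.2 ∧ Even (Xval w p.1) then (1 : ℕ) else 0 : ℕ) : ℝ))
      (uniformM (Fin n → Fin (2*m))) =
    n * (n - 1) * (2 * n + 4 * m - 5) / (32 * m^2) :=
  variance_C_general n m hm
end

section
/- Let n ≥ 2, m ≥ 1. Let X_1,…,X_n be i.i.d. uniform on {1,…,2m}, let U_1,…,U_n be i.i.d. uniform on (0,1) independent of the X's, set Z_i = (X_i, U_i), and let h((x_1,u_1),(x_2,u_2)) = 1{x_1>x_2}1{u_1<u_2} + 1{x_1<x_2}1{u_1>u_2} + 1{x_1 = x_2 and x_1 even} − 1/2. Then W_{n,m} := (1/C(n,2)) · (I_{n,m} − C(n,2)/2) satisfies the distributional identity W_{n,m} =_d (1/C(n,2)) Σ_{1≤i<k≤n} h(Z_i, Z_k); that is, W_{n,m} is equal in distribution to an order-2 U-statistic with symmetric kernel h. -/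
open MeasureTheory ProbabilityTheory Finset Filter

/-- The uniform probability measure on `(0,1)`. -/
noncomputable def unif01 : Measure ℝ := (volume : Measure ℝ).restrict (Set.Ioo 0 1)

/-- The law of `Z_i = (X_i, U_i)`: `X_i` uniform on `{1,…,2m}` (0-based pile index, value
`x` carries label `x+1`), `U_i` uniform on `(0,1)`, independent. -/
noncomputable def zMeasure (m : ℕ) : Measure (Fin (2*m) × ℝ) :=
  (uniformM (Fin (2*m))).prod unif01

/-- The symmetric kernel
`h((x₁,u₁),(x₂,u₂)) = 1{x₁>x₂}1{u₁<u₂} + 1{x₁<x₂}1{u₁>u₂} + 1{x₁=x₂, x₁ even} − 1/2`,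
where the pile value in `Fin (2*m)` encodes the label `x = (·) + 1 ∈ {1,…,2m}`. -/
noncomputable def hker (m : ℕ) (z1 z2 : Fin (2*m) × ℝ) : ℝ :=
  (if (z2.1 : ℕ) < (z1.1 : ℕ) then 1 else 0) * (if z1.2 < z2.2 then 1 else 0)
  + (if (z1.1 : ℕ) < (z2.1 : ℕ) then 1 else 0) * (if z2.2 < z1.2 then 1 else 0)
  + (if z1.1 = z2.1 ∧ Even ((z1.1 : ℕ) + 1) then 1 else 0) - 1/2

/-!
Relabel the cards in increasing order of the a.s. distinct uniforms `U_i`. Since `h` is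
symmetric, the U-statistic does not change, and for a pair `i < k` with `U_i < U_k` the kernel
`h(Z_i, Z_k) + 1/2` is exactly the indicator that cards `i` and `k` end up inverted by the shelf
shuffle with pile labels `X`. Hence, conditionally on `U`, the U-statistic equals `W` evaluated at
a permuted pile assignment, and permuting the cards preserves the uniform law of the assignment.
-/

section PairSums

variable {ι M : Type*} [Fintype ι] [LinearOrder ι] [AddCommMonoid M]

theorem sum_filter_lt_eq_sum_not_isDiag (f : Sym2 ι → M) :
    ∑ p ∈ (univ : Finset (ι × ι)).filter (fun p => p.1 < p.2), f s(p.1, p.2) =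
      ∑ z ∈ (univ : Finset (Sym2 ι)).filter (fun z => ¬ z.IsDiag), f z := by
  rw [← sym2_univ, sum_sym2_filter_not_isDiag]
  congr 1
  ext p
  simpa using fun h : p.1 < p.2 => h.ne

theorem card_filter_lt_eq_choose_two :
    ((univ : Finset (ι × ι)).filter (fun p => p.1 < p.2)).card = (Fintype.card ι).choose 2 := by
  rw [← Sym2.card_subtype_not_diag, Fintype.card_subtype]
  simpa using sum_filter_lt_eq_sum_not_isDiag (ι := ι) (M := ℕ) (fun _ => 1)

theorem sum_filter_lt_comp_perm (f : Sym2 ι → M) (σ : Equiv.Perm ι) :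
    ∑ p ∈ (univ : Finset (ι × ι)).filter (fun p => p.1 < p.2), f s(σ p.1, σ p.2) =
      ∑ p ∈ (univ : Finset (ι × ι)).filter (fun p => p.1 < p.2), f s(p.1, p.2) := by
  have hσ : Function.Bijective (Sym2.map σ) :=
    Finite.injective_iff_bijective.mp (Sym2.map.injective σ.injective)
  calc _ = ∑ z ∈ (univ : Finset (Sym2 ι)).filter (fun z => ¬ z.IsDiag), f (Sym2.map σ z) :=
        sum_filter_lt_eq_sum_not_isDiag (f ∘ Sym2.map σ)
    _ = ∑ z ∈ (univ : Finset (Sym2 ι)).filter (fun z => ¬ z.IsDiag), f z :=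
        sum_bijective _ hσ (fun z => by simp [Sym2.isDiag_map σ.injective]) (fun _ _ => rfl)
    _ = _ := (sum_filter_lt_eq_sum_not_isDiag f).symm

end PairSums

section Inversions

variable {n : ℕ}

theorem invCount_inv (π : Equiv.Perm (Fin n)) : invCount π⁻¹ = invCount π := by
  refine card_nbij' (fun p => (π⁻¹ p.2, π⁻¹ p.1)) (fun p => (π p.2, π p.1)) ?_ ?_ ?_ ?_ <;>
    simp +contextual [Set.MapsTo, Set.LeftInvOn, Set.RightInvOn, Equiv.Perm.inv_def]

theorem Tuple.sort_symm_lt_sort_symm_iff {α : Type*} [LinearOrder α] {f : Fin n → α}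
    (hf : Function.Injective f) {i j : Fin n} :
    (Tuple.sort f).symm i < (Tuple.sort f).symm j ↔ f i < f j := by
  have hmono : StrictMono (f ∘ Tuple.sort f) :=
    (Tuple.monotone_sort f).strictMono_of_injective (hf.comp (Tuple.sort f).injective)
  simpa using hmono.lt_iff_lt (a := (Tuple.sort f).symm i) (b := (Tuple.sort f).symm j) |>.symm

theorem invCount_sort {α : Type*} [LinearOrder α] {f : Fin n → α} (hf : Function.Injective f) :
    invCount (Tuple.sort f) =
      ((univ : Finset (Fin n × Fin n)).filter (fun p => p.1 < p.2 ∧ f p.2 < f p.1)).card := by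
  rw [← invCount_inv, invCount]
  simp only [Equiv.Perm.inv_def, Tuple.sort_symm_lt_sort_symm_iff hf]

end Inversions

section Shelf

variable {m n : ℕ}

def PileInverted (x y : Fin (2*m)) : Prop := y < x ∨ (x = y ∧ Even ((x : ℕ) + 1))

instance (x y : Fin (2*m)) : Decidable (PileInverted x y) := by
  unfold PileInverted; infer_instance

theorem shelfKey_injective (w : Fin n → Fin (2*m)) : Function.Injective (shelfKey w) := by
  intro i j h
  obtain ⟨hw, hij⟩ := Prod.ext_iff.mp (toLex.injective h)
  simp only [Xval] at hij
  split_ifs at hij <;> omega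

theorem shelfKey_lt_shelfKey_iff (w : Fin n → Fin (2*m)) {i j : Fin n} (hij : i < j) :
    shelfKey w j < shelfKey w i ↔ PileInverted (w i) (w j) := by
  have : (i : ℤ) < j := by exact_mod_cast hij
  rw [shelfKey, shelfKey, Prod.Lex.toLex_lt_toLex, PileInverted]
  by_cases h : w i = w j
  · simp only [h, lt_irrefl, false_or, true_and, Xval]
    split_ifs with he <;> simp [he] <;> omega
  · simp [h, Ne.symm h]

theorem shelfInv_eq_card (w : Fin n → Fin (2*m)) :
    shelfInv m n w = ((univ : Finset (Fin n × Fin n)).filter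
      (fun p => p.1 < p.2 ∧ PileInverted (w p.1) (w p.2))).card := by
  rw [shelfInv, shelfPerm, invCount_sort (shelfKey_injective w)]
  exact congrArg card (filter_congr fun p _ => and_congr_right (shelfKey_lt_shelfKey_iff w))

theorem hker_comm (z₁ z₂ : Fin (2*m) × ℝ) : hker m z₁ z₂ = hker m z₂ z₁ := by
  unfold hker
  rw [if_congr (show z₁.1 = z₂.1 ∧ Even ((z₁.1 : ℕ) + 1) ↔ z₂.1 = z₁.1 ∧ Even ((z₂.1 : ℕ) + 1) by
    constructor <;> rintro ⟨h, he⟩ <;> exact ⟨h.symm, h ▸ he⟩) rfl rfl]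
  ring

theorem hker_of_lt {x y : Fin (2*m)} {s t : ℝ} (hst : s < t) :
    hker m (x, s) (y, t) = (if PileInverted x y then 1 else 0) - 1/2 := by
  have : ¬ t < s := not_lt_of_gt hst
  simp only [hker, PileInverted, hst, this, if_true, if_false, mul_one, mul_zero, add_zero]
  by_cases h : y < x
  · simp [Fin.lt_def.mp h, h, h.ne']
  · simp [h]

end Shelf

section UStatistic

variable {m n : ℕ}

theorem sum_hker_of_strictMono (w : Fin n → Fin (2*m)) {u : Fin n → ℝ} (hu : StrictMono u) :
    ∑ p ∈ (univ : Finset (Fin n × Fin n)).filter (fun p => p.1 < p.2),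
      hker m (w p.1, u p.1) (w p.2, u p.2) = (shelfInv m n w : ℝ) - (n.choose 2 : ℝ) / 2 := by
  calc _ = ∑ p ∈ (univ : Finset (Fin n × Fin n)).filter (fun p => p.1 < p.2),
        ((if PileInverted (w p.1) (w p.2) then 1 else 0) - 1/2 : ℝ) :=
        sum_congr rfl fun p hp => hker_of_lt (hu (mem_filter.mp hp).2)
    _ = _ := by
      rw [sum_sub_distrib, ← natCast_card_filter, filter_filter, shelfInv_eq_card, sum_const,
        card_filter_lt_eq_choose_two, Fintype.card_fin, nsmul_eq_mul]
      ring

theorem sum_hker_eq_shelfInv_comp_sort (w : Fin n → Fin (2*m)) {u : Fin n → ℝ}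
    (hu : Function.Injective u) :
    ∑ p ∈ (univ : Finset (Fin n × Fin n)).filter (fun p => p.1 < p.2),
      hker m (w p.1, u p.1) (w p.2, u p.2) =
      (shelfInv m n (w ∘ Tuple.sort u) : ℝ) - (n.choose 2 : ℝ) / 2 := by
  rw [← sum_hker_of_strictMono (w ∘ Tuple.sort u)
    ((Tuple.monotone_sort u).strictMono_of_injective (hu.comp (Tuple.sort u).injective))]
  exact (sum_filter_lt_comp_perm
    (Sym2.lift ⟨hker m, hker_comm⟩ ∘ Sym2.map (fun i => (w i, u i))) (Tuple.sort u)).symm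

end UStatistic

section PiInjective

variable {ι α : Type*} [Fintype ι] [MeasurableSpace α] [MeasurableEq α]
  (μ : Measure α) [SigmaFinite μ] [NullSingletonClass μ]

theorem MeasureTheory.Measure.pi_setOf_apply_eq_apply_null {i k : ι} (hik : i ≠ k) :
    Measure.pi (fun _ : ι => μ) {u | u i = u k} = 0 := by
  classical
  let T : Set (({j // j = i} → α) × ({j // ¬ j = i} → α)) :=
    {q | q.1 ⟨i, rfl⟩ = q.2 ⟨k, hik.symm⟩}
  have hT : MeasurableSet T :=
    measurableSet_eq_fun (measurable_fst.eval) (measurable_snd.eval)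
  have hpre : {u : ι → α | u i = u k} =
      MeasurableEquiv.piEquivPiSubtypeProd (fun _ => α) (· = i) ⁻¹' T := rfl
  rw [hpre, (measurePreserving_piEquivPiSubtypeProd (fun _ => μ) (· = i)).measure_preimage
    hT.nullMeasurableSet, Measure.measure_prod_null hT]
  refine Filter.Eventually.of_forall fun a => ?_
  simpa [T, eq_comm] using
    Measure.pi_hyperplane (fun _ : {j // ¬ j = i} => μ) ⟨k, hik.symm⟩ (a ⟨i, rfl⟩)

theorem ae_injective_pi : ∀ᵐ u ∂Measure.pi (fun _ : ι => μ), Function.Injective u := by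
  have hne : ∀ i k, ∀ᵐ u ∂Measure.pi (fun _ : ι => μ), i ≠ k → u i ≠ u k := by
    intro i k
    by_cases hik : i = k
    · simp [hik]
    · simpa [hik, ae_iff] using Measure.pi_setOf_apply_eq_apply_null μ hik
  filter_upwards [ae_all_iff.mpr fun i => ae_all_iff.mpr (hne i)] with u hu i k huik
  by_contra hik
  exact hu i k hik huik

end PiInjective

section Measure

theorem uniformM_map_of_bijective {α : Type*} [Fintype α] [MeasurableSpace α]
    [MeasurableSingletonClass α] {f : α → α} (hf : Function.Bijective f) :
    (uniformM α).map f = uniformM α := by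
  refine Measure.ext_iff_singleton.mpr fun x => ?_
  obtain ⟨y, rfl⟩ := hf.surjective x
  rw [Measure.map_apply (measurable_of_finite f) (measurableSet_singleton _),
    show f ⁻¹' {f y} = {y} from Set.ext fun _ => hf.injective.eq_iff]
  simp [uniformM]

instance : IsProbabilityMeasure unif01 :=
  ⟨by simp [unif01]⟩

instance : NullSingletonClass unif01 := by
  unfold unif01; infer_instance

theorem MeasureTheory.Measure.map_prod_eq_of_ae_map_eq {α β γ : Type*} [MeasurableSpace α] [MeasurableSpace β]
    [MeasurableSpace γ] {μ : Measure α} {ν : Measure β} [SFinite μ] [IsProbabilityMeasure ν]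
    {F : α × β → γ} (hF : Measurable F) {ρ : Measure γ}
    (h : ∀ᵐ y ∂ν, μ.map (fun x => F (x, y)) = ρ) : (μ.prod ν).map F = ρ := by
  ext s hs
  rw [Measure.map_apply hF hs, Measure.prod_apply_symm (hF hs)]
  calc ∫⁻ y, μ ((fun x => (x, y)) ⁻¹' (F ⁻¹' s)) ∂ν = ∫⁻ _, ρ s ∂ν := by
        refine lintegral_congr_ae (h.mono fun y (hy : _ = _) => ?_)
        rw [← hy]
        exact (Measure.map_apply (hF.comp measurable_prodMk_right) hs).symm
    _ = ρ s := by simp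

theorem measurable_hker_mk (m : ℕ) (a b : Fin (2*m)) :
    Measurable fun st : ℝ × ℝ => hker m (a, st.1) (b, st.2) := by
  have hlt : Measurable fun st : ℝ × ℝ => if st.1 < st.2 then (1 : ℝ) else 0 :=
    Measurable.ite (measurableSet_lt measurable_fst measurable_snd) measurable_const
      measurable_const
  have hgt : Measurable fun st : ℝ × ℝ => if st.2 < st.1 then (1 : ℝ) else 0 :=
    Measurable.ite (measurableSet_lt measurable_snd measurable_fst) measurable_const
      measurable_const
  exact (((hlt.const_mul (if (b : ℕ) < a then 1 else 0)).add
    (hgt.const_mul (if (a : ℕ) < b then 1 else 0))).add_const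
    (if a = b ∧ Even ((a : ℕ) + 1) then 1 else 0)).sub_const (1 / 2)

theorem measurable_sum_hker (m n : ℕ) :
    Measurable fun z : (Fin n → Fin (2*m)) × (Fin n → ℝ) =>
      ∑ p ∈ (univ : Finset (Fin n × Fin n)).filter (fun p => p.1 < p.2),
        hker m (z.1 p.1, z.2 p.1) (z.1 p.2, z.2 p.2) :=
  measurable_from_prod_countable_right fun w => Finset.measurable_sum _ fun p _ =>
    (measurable_hker_mk m (w p.1) (w p.2)).comp (f := fun u : Fin n → ℝ => (u p.1, u p.2))
      (by fun_prop)

end Measure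

theorem W_eq_d_U_statistic_general (n m : ℕ) :
    Measure.map (fun w : Fin n → Fin (2*m) =>
        (1 / (n.choose 2 : ℝ)) * ((shelfInv m n w : ℝ) - (n.choose 2 : ℝ) / 2))
      (uniformM (Fin n → Fin (2*m))) =
    Measure.map (fun z : (Fin n → Fin (2*m)) × (Fin n → ℝ) =>
        (1 / (n.choose 2 : ℝ)) *
          ∑ p ∈ (Finset.univ : Finset (Fin n × Fin n)).filter (fun p => p.1 < p.2),
            hker m (z.1 p.1, z.2 p.1) (z.1 p.2, z.2 p.2))
      ((uniformM (Fin n → Fin (2*m))).prod (Measure.pi fun _ : Fin n => unif01)) := by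
  refine (Measure.map_prod_eq_of_ae_map_eq ((measurable_sum_hker m n).const_mul _) ?_).symm
  filter_upwards [ae_injective_pi unif01] with u hu
  simp only [sum_hker_eq_shelfInv_comp_sort _ hu]
  conv_rhs => rw [← uniformM_map_of_bijective (α := Fin n → Fin (2*m))
    (Tuple.sort u).bijective.comp_right]
  rw [Measure.map_map (measurable_of_finite _) (measurable_of_finite _)]
  rfl

/-- For `n ≥ 2`, `m ≥ 1`:
`W_{n,m} := (1/C(n,2))·(I_{n,m} − C(n,2)/2)` is equal in distribution to the order-2
U-statistic `(1/C(n,2)) Σ_{1≤i<k≤n} h(Z_i, Z_k)`, where `Z_i = (X_i, U_i)` with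
`X_1,…,X_n` i.i.d. uniform on `{1,…,2m}` and `U_1,…,U_n` i.i.d. uniform on `(0,1)`,
independent of the `X`'s. -/
theorem W_eq_d_U_statistic (n m : ℕ) (hn : 2 ≤ n) (hm : 1 ≤ m) :
    Measure.map (fun w : Fin n → Fin (2*m) =>
        (1 / (n.choose 2 : ℝ)) * ((shelfInv m n w : ℝ) - (n.choose 2 : ℝ) / 2))
      (uniformM (Fin n → Fin (2*m))) =
    Measure.map (fun z : (Fin n → Fin (2*m)) × (Fin n → ℝ) =>
        (1 / (n.choose 2 : ℝ)) *
          ∑ p ∈ (Finset.univ : Finset (Fin n × Fin n)).filter (fun p => p.1 < p.2),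
            hker m (z.1 p.1, z.2 p.1) (z.1 p.2, z.2 p.2))
      ((uniformM (Fin n → Fin (2*m))).prod (Measure.pi fun _ : Fin n => unif01)) :=
  W_eq_d_U_statistic_general n m
end
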